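/- arXiv:1004.1240 — 9 statements merged into one kernel-verified Lean document; each statement's English description precedes it below -/
import Mathlib

section
/- Let S be an involutive algebra anti-automorphism of the matrix algebra M_n(ℂ). Then there exists an invertible matrix u such that S(x) = (u x u⁻¹)ᵀ for all x in M_n(ℂ). -/
/-!
Composing `S` with the transpose gives an algebra automorphism `x ↦ (S x)ᵀ` of `M_n(ℂ)`; it
preserves `1` because an anti-multiplicative surjection does. By Skolem–Noether for endomorphism
algebras (`AlgEquiv.eq_linearEquivConjAlgEquiv`) this automorphism is conjugation by an invertible
matrix `u`, and transposing back gives `S`.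
-/

open Matrix

theorem map_one_of_surjective_of_map_mul_rev {M : Type*} [MulOneClass M] {S : M → M}
    (hS : Function.Surjective S) (hmul : ∀ x y, S (x * y) = S y * S x) : S 1 = 1 := by
  obtain ⟨x, hx⟩ := hS 1
  simpa [hx] using (hmul x 1).symm

theorem Matrix.exists_isUnit_algEquiv_apply_eq_mul_mul_inv {K n : Type*} [Field K] [Fintype n]
    [DecidableEq n] (f : Matrix n n K ≃ₐ[K] Matrix n n K) :
    ∃ u : Matrix n n K, IsUnit u ∧ ∀ x, f x = u * x * u⁻¹ := by
  obtain ⟨T, hT⟩ := (toLinAlgEquiv'.autCongr f).eq_linearEquivConjAlgEquiv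
  set u := LinearMap.toMatrixAlgEquiv' (T : Module.End K (n → K))
  have hinv : u * LinearMap.toMatrixAlgEquiv' (T.symm : Module.End K (n → K)) = 1 := by
    rw [← map_mul, ← map_one LinearMap.toMatrixAlgEquiv']
    congr 1
    ext; simp
  refine ⟨u, IsUnit.of_mul_eq_one _ hinv, fun x => ?_⟩
  have hfx := congrArg (LinearMap.toMatrixAlgEquiv' ∘ (· (toLinAlgEquiv' x))) hT
  simp only [Function.comp_apply, AlgEquiv.autCongr_apply, AlgEquiv.trans_apply,
    AlgEquiv.symm_apply_apply, LinearEquiv.conjAlgEquiv_apply,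
    LinearMap.toMatrixAlgEquiv'_toLinAlgEquiv'] at hfx
  rw [hfx, inv_eq_right_inv hinv, ← Module.End.mul_eq_comp, ← Module.End.mul_eq_comp, map_mul,
    map_mul, LinearMap.toMatrixAlgEquiv'_toLinAlgEquiv', mul_assoc]

def Matrix.transposeCompAlgEquiv {R n : Type*} [CommSemiring R] [Fintype n] [DecidableEq n]
    (S : Matrix n n R →ₗ[R] Matrix n n R)
    (hmul : ∀ x y, S (x * y) = S y * S x) (hinvol : ∀ x, S (S x) = x) :
    Matrix n n R ≃ₐ[R] Matrix n n R :=
  AlgEquiv.ofLinearEquiv ((LinearEquiv.ofInvolutive S hinvol).trans (transposeLinearEquiv n n R R))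
    (by simpa [LinearEquiv.ofInvolutive] using
      map_one_of_surjective_of_map_mul_rev (Function.Involutive.surjective hinvol) hmul)
    (by simp [LinearEquiv.ofInvolutive, hmul])

theorem stmt0 (n : ℕ) (S : Matrix (Fin n) (Fin n) ℂ →ₗ[ℂ] Matrix (Fin n) (Fin n) ℂ)
    (hmul : ∀ x y, S (x * y) = S y * S x) (hinvol : ∀ x, S (S x) = x) :
    ∃ u : Matrix (Fin n) (Fin n) ℂ, IsUnit u ∧ ∀ x, S x = (u * x * u⁻¹)ᵀ := by
  obtain ⟨u, hu, hconj⟩ :=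
    exists_isUnit_algEquiv_apply_eq_mul_mul_inv (transposeCompAlgEquiv S hmul hinvol)
  refine ⟨u, hu, fun x => ?_⟩
  simpa [transposeCompAlgEquiv, LinearEquiv.ofInvolutive] using congrArg transpose (hconj x)
end

section
/- Every invertible symmetric complex matrix u can be written as u = vᵀ v for some invertible complex matrix v. -/
/-!
Over an algebraically closed field of characteristic not two all nondegenerate quadratic forms
on a given space are isometric. An isometry from `x ↦ xᵀ u x` to the sum of squares `x ↦ xᵀ x`
is an invertible change of variables `v` with `u = vᵀ * 1 * v`.
-/

open Matrix

namespace Matrix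

variable {ι : Type*} [Fintype ι] [DecidableEq ι]

theorem IsSymm.toLinearMap₂'_apply_comm {R : Type*} [CommSemiring R] {M : Matrix ι ι R}
    (hM : M.IsSymm) (x y : ι → R) : toLinearMap₂' R M x y = toLinearMap₂' R M y x := by
  rw [toLinearMap₂'_apply', toLinearMap₂'_apply', dotProduct_mulVec, dotProduct_comm,
    ← mulVec_transpose, hM.eq]

variable {K : Type*} [Field K] [Invertible (2 : K)]

theorem IsSymm.toMatrix'_toQuadraticForm' {M : Matrix ι ι K} (hM : M.IsSymm) :
    M.toQuadraticForm'.toMatrix' = M := by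
  rw [QuadraticForm.toMatrix', toQuadraticForm',
    QuadraticMap.associated_left_inverse K hM.toLinearMap₂'_apply_comm,
    LinearMap.toMatrix'_toLinearMap₂']

theorem IsSymm.separatingLeft_associated_toQuadraticForm' {M : Matrix ι ι K} (hM : M.IsSymm)
    (hdet : M.det ≠ 0) : (QuadraticMap.associated (R := K) M.toQuadraticForm').SeparatingLeft := by
  rw [toQuadraticForm', QuadraticMap.associated_left_inverse K hM.toLinearMap₂'_apply_comm,
    LinearMap.separatingLeft_toLinearMap₂'_iff_det_ne_zero]
  exact hdet

theorem IsSymm.exists_eq_transpose_mul_self [IsAlgClosed K] {M : Matrix ι ι K} (hM : M.IsSymm)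
    (hdet : M.det ≠ 0) : ∃ A : Matrix ι ι K, IsUnit A ∧ M = Aᵀ * A := by
  obtain ⟨f⟩ := QuadraticForm.equivalent_of_isAlgClosed M.toQuadraticForm'
    (1 : Matrix ι ι K).toQuadraticForm' (hM.separatingLeft_associated_toQuadraticForm' hdet)
    (isSymm_one.separatingLeft_associated_toQuadraticForm' (by simp))
  refine ⟨LinearMap.toMatrix' f.toLinearEquiv.toLinearMap, ?_, ?_⟩
  · rw [isUnit_iff_isUnit_det, LinearMap.det_toMatrix']
    exact f.toLinearEquiv.isUnit_det'
  · have hcomp : (1 : Matrix ι ι K).toQuadraticForm'.comp f.toLinearEquiv.toLinearMap =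
        M.toQuadraticForm' := QuadraticMap.ext f.map_app
    have := congrArg QuadraticForm.toMatrix' hcomp
    rwa [QuadraticForm.toMatrix'_comp, isSymm_one.toMatrix'_toQuadraticForm',
      hM.toMatrix'_toQuadraticForm', Matrix.mul_one, eq_comm] at this

end Matrix

theorem stmt2 (n : ℕ) (u : Matrix (Fin n) (Fin n) ℂ) (hu : IsUnit u) (hsymm : uᵀ = u) :
    ∃ v : Matrix (Fin n) (Fin n) ℂ, IsUnit v ∧ u = vᵀ * v :=
  IsSymm.exists_eq_transpose_mul_self hsymm ((isUnit_iff_isUnit_det u).mp hu).ne_zero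
end

section
/- Let A ∈ M_n(ℂ) be a matrix with nonzero entries α_1,…,α_{n-1} on the superdiagonal and zeros elsewhere, and B ∈ M_n(ℂ) a matrix with nonzero entries β_1,…,β_{n-1} on the subdiagonal and zeros elsewhere. Then A and B generate M_n(ℂ) as a unital ℂ-algebra. -/
/-!
In size `m + 1`, `Aᵐ` is a nonzero multiple of the matrix unit `E_{0m}` and `Bᵐ` one of `E_{m0}`,
so `AᵐBᵐ` is a nonzero multiple of `E_{00}`. Then `Bⁱ E_{00} · E_{00} Aʲ` is a nonzero multiple of
`E_{ij}`, and the matrix units span.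
-/

open Matrix Finset

def weightedShift {R : Type*} [Zero R] {n : ℕ} (w : ℕ → R) : Matrix (Fin n) (Fin n) R :=
  of fun i j => if (j : ℕ) = i + 1 then w i else 0

theorem Subalgebra.eq_top_of_single_one_mem {R ι : Type*} [CommSemiring R] [Fintype ι]
    [DecidableEq ι] (S : Subalgebra R (Matrix ι ι R)) (h : ∀ i j, single i j (1 : R) ∈ S) :
    S = ⊤ := by
  refine eq_top_iff.2 fun M _ => ?_
  rw [matrix_eq_sum_single M]
  refine sum_mem fun i _ => sum_mem fun j _ => ?_
  simpa [smul_single] using S.smul_mem (h i j) (M i j)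

theorem prod_range_ne_zero {M₀ : Type*} [CommMonoidWithZero M₀] [NoZeroDivisors M₀]
    [Nontrivial M₀] {w : ℕ → M₀} {m : ℕ} (hw : ∀ t < m, w t ≠ 0) {k : ℕ} (hk : k ≤ m) :
    ∏ t ∈ range k, w t ≠ 0 :=
  prod_ne_zero_iff.2 fun t ht => hw t ((mem_range.1 ht).trans_le hk)

section CommSemiring

variable {R : Type*} [CommSemiring R]

theorem weightedShift_pow_apply {n : ℕ} (w : ℕ → R) (k : ℕ) (i j : Fin n) :
    (weightedShift w ^ k) i j = if (j : ℕ) = i + k then ∏ t ∈ range k, w (i + t) else 0 := by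
  induction k generalizing i with
  | zero => simp [one_apply, Fin.ext_iff, eq_comm]
  | succ k ih =>
    rw [pow_succ', mul_apply]
    simp only [ih]
    simp only [weightedShift, of_apply, ite_mul, zero_mul]
    rw [Fin.sum_univ_eq_sum_range (fun l => if l = (i : ℕ) + 1 then
      w i * (if (j : ℕ) = l + k then ∏ t ∈ range k, w (l + t) else 0) else 0), sum_ite_eq']
    simp only [mem_range, prod_range_succ' (fun t => w (i + t)), add_zero]
    split_ifs <;> first | omega | simp [mul_comm, add_assoc, add_comm 1]

variable {m : ℕ}

theorem weightedShift_pow_self (w : ℕ → R) :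
    weightedShift w ^ m = (∏ t ∈ range m, w t) • single 0 (Fin.last m) (1 : R) := by
  ext p q
  have corner : (q : ℕ) = p + m ↔ 0 = (p : ℕ) ∧ m = (q : ℕ) := by omega
  simp only [weightedShift_pow_apply, corner, Matrix.smul_apply, smul_eq_mul, single_apply,
    Fin.ext_iff, Fin.val_last, Fin.val_zero]
  split_ifs with h
  · simp [← h.1]
  · simp

theorem single_zero_mul_weightedShift_pow (w : ℕ → R) (k : Fin (m + 1)) :
    single 0 0 1 * weightedShift w ^ (k : ℕ) = (∏ t ∈ range k, w t) • single 0 k (1 : R) := by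
  ext p q
  by_cases hp : p = 0
  · subst hp
    simp [weightedShift_pow_apply, single_apply, Fin.ext_iff, eq_comm]
  · simp [hp, Ne.symm hp]

theorem transpose_weightedShift_pow_mul_single_zero (w : ℕ → R) (k : Fin (m + 1)) :
    (weightedShift w)ᵀ ^ (k : ℕ) * single 0 0 1 = (∏ t ∈ range k, w t) • single k 0 (1 : R) := by
  simpa using congrArg transpose (single_zero_mul_weightedShift_pow w k)

end CommSemiring

section Field

variable {K : Type*} [Field K] {m : ℕ} {α β : ℕ → K}
  (hα : ∀ t < m, α t ≠ 0) (hβ : ∀ t < m, β t ≠ 0)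
  {S : Subalgebra K (Matrix (Fin (m + 1)) (Fin (m + 1)) K)}
  (hA : weightedShift α ∈ S) (hB : (weightedShift β)ᵀ ∈ S)
include hα hβ hA hB

theorem single_zero_zero_mem_of_weightedShift_mem :
    (single 0 0 1 : Matrix (Fin (m + 1)) (Fin (m + 1)) K) ∈ S := by
  have hprod : weightedShift α ^ m * (weightedShift β)ᵀ ^ m
      = ((∏ t ∈ range m, α t) * ∏ t ∈ range m, β t) •
        (single 0 0 1 : Matrix (Fin (m + 1)) _ K) := by
    rw [← transpose_pow, weightedShift_pow_self, weightedShift_pow_self, transpose_smul,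
      transpose_single, smul_mul_smul_comm, single_mul_single_same, mul_one]
  have hc : (∏ t ∈ range m, α t) * ∏ t ∈ range m, β t ≠ 0 :=
    mul_ne_zero (prod_range_ne_zero hα le_rfl) (prod_range_ne_zero hβ le_rfl)
  refine ((Subalgebra.toSubmodule S).smul_mem_iff hc).1 ?_
  exact hprod ▸ S.mul_mem (S.pow_mem hA m) (S.pow_mem hB m)

theorem single_one_mem_of_weightedShift_mem (i j : Fin (m + 1)) : single i j (1 : K) ∈ S := by
  have hprod : (weightedShift β)ᵀ ^ (i : ℕ) * single 0 0 1 *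
        (single 0 0 1 * weightedShift α ^ (j : ℕ))
      = ((∏ t ∈ range i, β t) * ∏ t ∈ range j, α t) • single i j (1 : K) := by
    rw [transpose_weightedShift_pow_mul_single_zero, single_zero_mul_weightedShift_pow,
      smul_mul_smul_comm, single_mul_single_same, mul_one]
  have hc : (∏ t ∈ range i, β t) * ∏ t ∈ range j, α t ≠ 0 :=
    mul_ne_zero (prod_range_ne_zero hβ (Nat.lt_succ_iff.1 i.isLt))
      (prod_range_ne_zero hα (Nat.lt_succ_iff.1 j.isLt))
  refine ((Subalgebra.toSubmodule S).smul_mem_iff hc).1 ?_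
  have hE := single_zero_zero_mem_of_weightedShift_mem hα hβ hA hB
  exact hprod ▸ S.mul_mem (S.mul_mem (S.pow_mem hB i) hE) (S.mul_mem hE (S.pow_mem hA j))

end Field

theorem stmt6 (n : ℕ) (α β : ℕ → ℂ)
    (hα : ∀ i, i + 1 < n → α i ≠ 0) (hβ : ∀ i, i + 1 < n → β i ≠ 0)
    (A B : Matrix (Fin n) (Fin n) ℂ)
    (hA : A = Matrix.of fun (i j : Fin n) => if (j : ℕ) = (i : ℕ) + 1 then α (i : ℕ) else 0)
    (hB : B = Matrix.of fun (i j : Fin n) => if (i : ℕ) = (j : ℕ) + 1 then β (j : ℕ) else 0) :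
    Algebra.adjoin ℂ {A, B} = ⊤ := by
  have hA' : A = weightedShift α := hA
  have hB' : B = (weightedShift β)ᵀ := hB
  refine Subalgebra.eq_top_of_single_one_mem _ fun i j => ?_
  obtain ⟨m, rfl⟩ : ∃ m, n = m + 1 := Nat.exists_eq_add_one.2 i.pos
  exact single_one_mem_of_weightedShift_mem (fun t ht => hα t (by omega))
    (fun t ht => hβ t (by omega)) (hA' ▸ Algebra.subset_adjoin (Set.mem_insert _ _))
    (hB' ▸ Algebra.subset_adjoin (Set.mem_insert_of_mem _ rfl)) i j
end

section
/- For every n ≥ 1, there exists an invertible matrix x ∈ M_n(ℂ) such that x and its transpose xᵀ together generate M_n(ℂ) as a unital ℂ-algebra. -/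
/-!
Take `x = 1 + N` with `N` the nilpotent shift, so `x` is a unit and the algebra generated by
`x, xᵀ` is the one generated by `N, Nᵀ`. In dimension `m + 1`, `N ^ m * Nᵀ ^ m` is the matrix
unit `E₀₀`, and `Nᵀ ^ i * E₀₀ * N ^ j = Eᵢⱼ`; the matrix units span everything.
-/

open Matrix

namespace Matrix

theorem subalgebra_eq_top_of_single_one_mem {R n : Type*} [CommSemiring R] [Fintype n]
    [DecidableEq n] {S : Subalgebra R (Matrix n n R)} (h : ∀ i j, single i j (1 : R) ∈ S) :
    S = ⊤ :=
  eq_top_iff.2 fun M _ => Matrix.induction_on' M S.zero_mem (fun _ _ => S.add_mem)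
    fun i j c => by simpa [smul_single] using S.smul_mem (h i j) c

def shiftMatrix (R : Type*) [Zero R] [One R] (n : ℕ) : Matrix (Fin n) (Fin n) R :=
  of fun i j => if (i : ℕ) + 1 = j then 1 else 0

section Semiring

variable {R : Type*} [Semiring R]

theorem shiftMatrix_apply {n : ℕ} (i j : Fin n) :
    shiftMatrix R n i j = if (i : ℕ) + 1 = j then 1 else 0 := rfl

theorem shiftMatrix_pow_apply {n : ℕ} (k : ℕ) (i j : Fin n) :
    (shiftMatrix R n ^ k) i j = if (i : ℕ) + k = j then 1 else 0 := by
  induction k generalizing j with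
  | zero => simp [one_apply, Fin.ext_iff]
  | succ k ih =>
    simp only [pow_succ, mul_apply, ih, shiftMatrix_apply, ite_mul, one_mul, zero_mul]
    rw [Fin.sum_univ_eq_sum_range
      (fun c => if (i : ℕ) + k = c then if c + 1 = (j : ℕ) then (1 : R) else 0 else 0)]
    simp only [Finset.sum_ite_eq, Finset.mem_range]
    have := j.isLt
    split_ifs <;> first | rfl | omega

theorem isNilpotent_shiftMatrix (n : ℕ) : IsNilpotent (shiftMatrix R n) :=
  ⟨n, by ext i j; simp [shiftMatrix_pow_apply]; omega⟩

theorem shiftMatrix_pow_last (m : ℕ) :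
    shiftMatrix R (m + 1) ^ m = single 0 (Fin.last m) 1 := by
  ext i j
  have := j.isLt
  simp only [shiftMatrix_pow_apply, single_apply, Fin.ext_iff, Fin.val_zero, Fin.val_last]
  split_ifs <;> first | rfl | omega

theorem single_zero_mul_shiftMatrix_pow {m : ℕ} (i j : Fin (m + 1)) :
    single i 0 (1 : R) * shiftMatrix R (m + 1) ^ (j : ℕ) = single i j 1 := by
  ext a b
  by_cases ha : a = i
  · subst ha; simp [shiftMatrix_pow_apply, single_apply, Fin.ext_iff]
  · simp [ha, Ne.symm ha]

end Semiring

variable {R : Type*} [CommSemiring R]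

theorem transpose_shiftMatrix_pow_mul_single_zero {m : ℕ} (i j : Fin (m + 1)) :
    (shiftMatrix R (m + 1))ᵀ ^ (i : ℕ) * single 0 j (1 : R) = single i j 1 := by
  simpa [transpose_mul, transpose_pow] using
    congrArg transpose (single_zero_mul_shiftMatrix_pow (R := R) j i)

theorem single_eq_transpose_shiftMatrix_pow_mul {m : ℕ} (i j : Fin (m + 1)) :
    single i j (1 : R) = (shiftMatrix R (m + 1))ᵀ ^ (i : ℕ) *
      (shiftMatrix R (m + 1) ^ m * (shiftMatrix R (m + 1))ᵀ ^ m) *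
        shiftMatrix R (m + 1) ^ (j : ℕ) := by
  rw [← transpose_pow _ m, shiftMatrix_pow_last, transpose_single, single_mul_single_same,
    mul_one, transpose_shiftMatrix_pow_mul_single_zero, single_zero_mul_shiftMatrix_pow]

theorem adjoin_shiftMatrix_transpose_eq_top (n : ℕ) :
    Algebra.adjoin R {shiftMatrix R n, (shiftMatrix R n)ᵀ} = ⊤ := by
  cases n with
  | zero => exact Subsingleton.elim _ _
  | succ m =>
    set S := Algebra.adjoin R {shiftMatrix R (m + 1), (shiftMatrix R (m + 1))ᵀ}
    have hN : shiftMatrix R (m + 1) ∈ S := Algebra.subset_adjoin (by simp)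
    have hNt : (shiftMatrix R (m + 1))ᵀ ∈ S := Algebra.subset_adjoin (by simp)
    refine subalgebra_eq_top_of_single_one_mem fun i j => ?_
    rw [single_eq_transpose_shiftMatrix_pow_mul]
    exact S.mul_mem (S.mul_mem (pow_mem hNt _) (S.mul_mem (pow_mem hN _) (pow_mem hNt _)))
      (pow_mem hN _)

end Matrix

theorem stmt7_general (n : ℕ) :
    ∃ x : Matrix (Fin n) (Fin n) ℂ, IsUnit x ∧ Algebra.adjoin ℂ {x, xᵀ} = ⊤ := by
  set N := shiftMatrix ℂ n
  refine ⟨1 + N, (isNilpotent_shiftMatrix n).isUnit_one_add, top_unique ?_⟩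
  set S := Algebra.adjoin ℂ {1 + N, (1 + N)ᵀ}
  have hx : 1 + N ∈ S := Algebra.subset_adjoin (by simp)
  have hxt : (1 + N)ᵀ ∈ S := Algebra.subset_adjoin (by simp)
  rw [← adjoin_shiftMatrix_transpose_eq_top n]
  refine Algebra.adjoin_le fun y hy => ?_
  rcases hy with rfl | rfl
  · simpa using S.sub_mem hx S.one_mem
  · simpa using S.sub_mem hxt S.one_mem

theorem stmt7 (n : ℕ) (hn : 1 ≤ n) :
    ∃ x : Matrix (Fin n) (Fin n) ℂ, IsUnit x ∧ Algebra.adjoin ℂ {x, xᵀ} = ⊤ :=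
  stmt7_general n
end

section
/- Let S be an involutive algebra anti-automorphism of M_n(ℂ) ⊕ M_n(ℂ) that interchanges the two minimal central projections (1,0) and (0,1). Then there exists an invertible u ∈ M_n(ℂ) such that S(x ⊕ y) = u yᵀ u⁻¹ ⊕ uᵀ xᵀ (uᵀ)⁻¹ for all x, y. -/
/-!
Since `S` is anti-multiplicative and swaps the central idempotents `(1, 0)` and `(0, 1)`, it maps
`M_n ⊕ 0` onto `0 ⊕ M_n` and back; its restriction `x ↦ (S (x, 0)).2` is therefore an
anti-isomorphism `ψ : M_n → M_n` whose inverse is `y ↦ (S (0, y)).1`. Precomposing `ψ⁻¹` with the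
transpose gives an algebra automorphism of `M_n`, which is inner by Skolem–Noether:
`ψ⁻¹ (yᵀ) = u y u⁻¹`. Both components of `S (x, y)` are read off from this.
-/

open Matrix

theorem Matrix.exists_isUnit_algEquiv_apply_eq_conj {K n : Type*} [Field K] [Fintype n] [DecidableEq n]
    (f : Matrix n n K ≃ₐ[K] Matrix n n K) :
    ∃ u : Matrix n n K, IsUnit u ∧ ∀ a, f a = u * a * u⁻¹ := by
  obtain ⟨T, hT⟩ := (toLinAlgEquiv'.symm.trans (f.trans toLinAlgEquiv')).eq_linearEquivConjAlgEquiv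
  set M := LinearMap.toMatrixAlgEquiv' (R := K) (n := n)
  have hinv : M T.symm * M T = 1 := by
    rw [← map_mul, Module.End.mul_eq_comp, LinearEquiv.symm_comp, ← Module.End.one_eq_id, map_one]
  refine ⟨M T, IsUnit.of_mul_eq_one_right _ hinv, fun a => ?_⟩
  have h := AlgEquiv.congr_fun hT (toLinAlgEquiv' a)
  simp only [AlgEquiv.trans_apply, AlgEquiv.symm_apply_apply,
    LinearEquiv.conjAlgEquiv_apply] at h
  apply toLinAlgEquiv'.injective
  rw [inv_eq_left_inv hinv, h, map_mul, map_mul, Module.End.mul_eq_comp, Module.End.mul_eq_comp,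
    toLinAlgEquiv'_toMatrixAlgEquiv', toLinAlgEquiv'_toMatrixAlgEquiv', LinearMap.comp_assoc]

namespace LinearMap

variable {R A : Type*} [CommSemiring R] [Semiring A] [Algebra R A] {S : A × A →ₗ[R] A × A}

theorem apply_inl_of_swap (hmul : ∀ x y, S (x * y) = S y * S x) (hswap : S (1, 0) = (0, 1))
    (x : A) : S (x, 0) = (0, (S (x, 0)).2) := by
  have h : S (x, 0) = (0, 1) * S (x, 0) := by
    rw [← hswap, ← hmul, Prod.mk_mul_mk, mul_one, mul_zero]
  exact Prod.ext (by rw [h]; simp) rfl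

theorem apply_inr_of_swap (hmul : ∀ x y, S (x * y) = S y * S x) (hinvol : ∀ x, S (S x) = x)
    (hswap : S (1, 0) = (0, 1)) (y : A) : S (0, y) = ((S (0, y)).1, 0) := by
  have h : S (0, y) = (1, 0) * S (0, y) := by
    rw [← hinvol (1, 0), hswap, ← hmul, Prod.mk_mul_mk, mul_one, mul_zero]
  exact Prod.ext rfl (by rw [h]; simp)

def swapAntiEquiv (hmul : ∀ x y, S (x * y) = S y * S x) (hinvol : ∀ x, S (S x) = x)
    (hswap : S (1, 0) = (0, 1)) : A ≃ₐ[R] Aᵐᵒᵖ :=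
  AlgEquiv.ofLinearEquiv
    { toLinearMap := (MulOpposite.opLinearEquiv R).toLinearMap ∘ₗ snd R A A ∘ₗ S ∘ₗ inl R A A
      invFun := fun b => (S (0, b.unop)).1
      left_inv := fun x => by
        change (S (0, (S (x, 0)).2)).1 = x
        rw [← apply_inl_of_swap hmul hswap, hinvol]
      right_inv := fun b => by
        change MulOpposite.op (S ((S (0, b.unop)).1, 0)).2 = b
        rw [← apply_inr_of_swap hmul hinvol hswap, hinvol, MulOpposite.op_unop] }
    (by simp [hswap])
    (fun x y => by simp [← MulOpposite.op_mul, ← Prod.snd_mul, ← hmul])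

theorem swapAntiEquiv_apply (hmul : ∀ x y, S (x * y) = S y * S x) (hinvol : ∀ x, S (S x) = x)
    (hswap : S (1, 0) = (0, 1)) (x : A) :
    swapAntiEquiv hmul hinvol hswap x = MulOpposite.op (S (x, 0)).2 := rfl

theorem swapAntiEquiv_symm_apply (hmul : ∀ x y, S (x * y) = S y * S x) (hinvol : ∀ x, S (S x) = x)
    (hswap : S (1, 0) = (0, 1)) (y : A) :
    (swapAntiEquiv hmul hinvol hswap).symm (MulOpposite.op y) = (S (0, y)).1 := rfl

theorem apply_eq_swapAntiEquiv (hmul : ∀ x y, S (x * y) = S y * S x)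
    (hinvol : ∀ x, S (S x) = x) (hswap : S (1, 0) = (0, 1)) (x y : A) :
    S (x, y) = ((swapAntiEquiv hmul hinvol hswap).symm (MulOpposite.op y),
      (swapAntiEquiv hmul hinvol hswap x).unop) := by
  have hsplit : ((x, y) : A × A) = (x, 0) + (0, y) := by simp
  rw [swapAntiEquiv_apply, swapAntiEquiv_symm_apply, MulOpposite.unop_op, hsplit, map_add,
    apply_inl_of_swap hmul hswap, apply_inr_of_swap hmul hinvol hswap]
  simp

end LinearMap

theorem stmt11 (n : ℕ)
    (S : (Matrix (Fin n) (Fin n) ℂ × Matrix (Fin n) (Fin n) ℂ) →ₗ[ℂ]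
         (Matrix (Fin n) (Fin n) ℂ × Matrix (Fin n) (Fin n) ℂ))
    (hmul : ∀ x y, S (x * y) = S y * S x) (hinvol : ∀ x, S (S x) = x)
    (hswap : S (1, 0) = (0, 1)) :
    ∃ u : Matrix (Fin n) (Fin n) ℂ, IsUnit u ∧
      ∀ x y, S (x, y) = (u * yᵀ * u⁻¹, uᵀ * xᵀ * (uᵀ)⁻¹) := by
  set ψ := LinearMap.swapAntiEquiv hmul hinvol hswap
  obtain ⟨u, hu, hconj⟩ :=
    Matrix.exists_isUnit_algEquiv_apply_eq_conj ((transposeAlgEquiv (Fin n) ℂ ℂ).trans ψ.symm)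
  simp only [AlgEquiv.trans_apply, transposeAlgEquiv_apply] at hconj
  have hdet : IsUnit u.det := (isUnit_iff_isUnit_det u).mp hu
  have hψ (x) : ψ x = MulOpposite.op (u⁻¹ * x * u)ᵀ := by
    rw [eq_comm, ← AlgEquiv.symm_apply_eq, hconj]
    simp only [Matrix.mul_assoc, mul_nonsing_inv _ hdet, Matrix.mul_one,
      mul_nonsing_inv_cancel_left _ _ hdet]
  refine ⟨u, hu, fun x y => ?_⟩
  rw [LinearMap.apply_eq_swapAntiEquiv hmul hinvol hswap, ← transpose_transpose y, hconj, hψ]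
  simp [transpose_nonsing_inv, Matrix.mul_assoc]
end

section
/- Let S be an involutive algebra anti-automorphism of M_n(ℂ) ⊕ M_n(ℂ) interchanging the two minimal central projections. Then there is an algebra automorphism φ of M_n(ℂ) ⊕ M_n(ℂ) fixing the minimal central projections such that φ ∘ S ∘ φ⁻¹ is the map x ⊕ y ↦ yᵀ ⊕ xᵀ. -/
/-!
Multiplying by the central idempotents shows that `S` maps `A × 0` onto `0 × B` and `0 × B` onto
`A × 0`, so `S (x, y) = (σ y, σ⁻¹ x)` for an anti-isomorphism `σ : B → A`. For `A = B = Mₙ(ℂ)`,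
composing `σ` with the transpose gives an automorphism `τ` of `Mₙ(ℂ)`, and `φ = id × τ` conjugates
`S` to `(x, y) ↦ (yᵀ, xᵀ)`.
-/

open Matrix MulOpposite

structure IsSwapAntiInvolution {R A B : Type*} [CommSemiring R] [Semiring A] [Semiring B]
    [Algebra R A] [Algebra R B] (S : A × B →ₗ[R] A × B) : Prop where
  map_mul_rev : ∀ x y, S (x * y) = S y * S x
  involutive : ∀ x, S (S x) = x
  map_one_zero : S (1, 0) = (0, 1)

namespace IsSwapAntiInvolution

variable {R A B : Type*} [CommSemiring R] [Semiring A] [Semiring B] [Algebra R A] [Algebra R B]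
  {S : A × B →ₗ[R] A × B}

theorem map_zero_one (hS : IsSwapAntiInvolution S) : S (0, 1) = (1, 0) := by
  rw [← hS.map_one_zero, hS.involutive]

theorem fst_map_inl (hS : IsSwapAntiInvolution S) (x : A) : (S (x, 0)).1 = 0 := by
  have : S (x, 0) = (0, 1) * S (x, 0) := by
    rw [← hS.map_one_zero, ← hS.map_mul_rev, Prod.mk_mul_mk, mul_one, mul_zero]
  rw [this, Prod.fst_mul, zero_mul]

theorem snd_map_inr (hS : IsSwapAntiInvolution S) (y : B) : (S (0, y)).2 = 0 := by
  have : S (0, y) = S (0, y) * (1, 0) := by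
    rw [← hS.map_zero_one, ← hS.map_mul_rev, Prod.mk_mul_mk, mul_zero, one_mul]
  rw [this, Prod.snd_mul, mul_zero]

theorem map_inl (hS : IsSwapAntiInvolution S) (x : A) : S (x, 0) = (0, (S (x, 0)).2) :=
  Prod.ext (hS.fst_map_inl x) rfl

theorem map_inr (hS : IsSwapAntiInvolution S) (y : B) : S (0, y) = ((S (0, y)).1, 0) :=
  Prod.ext rfl (hS.snd_map_inr y)

theorem snd_map_fst_map_inr (hS : IsSwapAntiInvolution S) (y : B) :
    (S ((S (0, y)).1, 0)).2 = y := by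
  rw [← hS.map_inr, hS.involutive]

theorem fst_map_snd_map_inl (hS : IsSwapAntiInvolution S) (x : A) :
    (S (0, (S (x, 0)).2)).1 = x := by
  rw [← hS.map_inl, hS.involutive]

def antiEquiv (hS : IsSwapAntiInvolution S) : B ≃ₐ[R] Aᵐᵒᵖ :=
  AlgEquiv.ofLinearEquiv
    (LinearEquiv.ofLinearMap
      ((opLinearEquiv R).toLinearMap ∘ₗ LinearMap.fst R A B ∘ₗ S ∘ₗ LinearMap.inr R A B)
      (LinearMap.snd R A B ∘ₗ S ∘ₗ LinearMap.inl R A B ∘ₗ (opLinearEquiv R).symm.toLinearMap)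
      (LinearMap.ext fun a => unop_injective (hS.fst_map_snd_map_inl a.unop))
      (LinearMap.ext hS.snd_map_fst_map_inr))
    (congrArg op (by simpa using congrArg Prod.fst hS.map_zero_one))
    (fun a b => congrArg op (by simpa using congrArg Prod.fst (hS.map_mul_rev (0, a) (0, b))))

theorem antiEquiv_apply (hS : IsSwapAntiInvolution S) (y : B) :
    hS.antiEquiv y = op (S (0, y)).1 := rfl

theorem antiEquiv_symm_apply (hS : IsSwapAntiInvolution S) (a : Aᵐᵒᵖ) :
    hS.antiEquiv.symm a = (S (a.unop, 0)).2 := rfl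

theorem map_eq_antiEquiv (hS : IsSwapAntiInvolution S) (x : A) (y : B) :
    S (x, y) = ((hS.antiEquiv y).unop, hS.antiEquiv.symm (op x)) := by
  have hsplit : (x, y) = (x, 0) + (0, y) := by simp
  rw [hsplit, map_add, hS.map_inl, hS.map_inr]
  simp [antiEquiv_apply, antiEquiv_symm_apply]

end IsSwapAntiInvolution

theorem stmt12 (n : ℕ)
    (S : (Matrix (Fin n) (Fin n) ℂ × Matrix (Fin n) (Fin n) ℂ) →ₗ[ℂ]
         (Matrix (Fin n) (Fin n) ℂ × Matrix (Fin n) (Fin n) ℂ))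
    (hmul : ∀ x y, S (x * y) = S y * S x) (hinvol : ∀ x, S (S x) = x)
    (hswap : S (1, 0) = (0, 1)) :
    ∃ φ : (Matrix (Fin n) (Fin n) ℂ × Matrix (Fin n) (Fin n) ℂ) ≃ₐ[ℂ]
          (Matrix (Fin n) (Fin n) ℂ × Matrix (Fin n) (Fin n) ℂ),
      φ (1, 0) = (1, 0) ∧ φ (0, 1) = (0, 1) ∧
      ∀ x y, φ (S (φ.symm (x, y))) = (yᵀ, xᵀ) := by
  have hS : IsSwapAntiInvolution S := ⟨hmul, hinvol, hswap⟩
  refine ⟨AlgEquiv.prodCongr AlgEquiv.refl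
    (hS.antiEquiv.trans (transposeAlgEquiv (Fin n) ℂ ℂ).symm), ?_, ?_, fun x y => ?_⟩
  · simp
  · simp
  · simp [AlgEquiv.prodCongr_symm_apply, hS.map_eq_antiEquiv]
end

section
/- Let A and B be finite dimensional unital complex algebras, and let a ∈ A and b ∈ B be invertible. Then for all but finitely many λ ∈ ℂ, the subalgebra of A ⊕ B generated by the single element a ⊕ λb contains both a ⊕ 0 and 0 ⊕ b. -/
open Polynomial

lemma aeval_pair {A B : Type*} [Ring A] [Ring B] [Algebra ℂ A] [Algebra ℂ B]
    (x : A) (y : B) (p : ℂ[X]) :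
    Polynomial.aeval ((x, y) : A × B) p = (Polynomial.aeval x p, Polynomial.aeval y p) := by
  have h1 := Polynomial.aeval_algHom_apply (AlgHom.fst ℂ A B) ((x, y) : A × B) p
  have h2 := Polynomial.aeval_algHom_apply (AlgHom.snd ℂ A B) ((x, y) : A × B) p
  exact Prod.ext h1.symm h2.symm

lemma minpoly_coeff_zero_ne_zero {B : Type*} [Ring B] [Algebra ℂ B]
    [FiniteDimensional ℂ B] {b : B} (hb : IsUnit b) : (minpoly ℂ b).coeff 0 ≠ 0 := by
  have hib : IsIntegral ℂ b := Algebra.IsIntegral.isIntegral b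
  have hn : minpoly ℂ b ≠ 0 := minpoly.ne_zero hib
  intro h0
  obtain ⟨g, hg⟩ : (X : ℂ[X]) ∣ minpoly ℂ b := Polynomial.X_dvd_iff.mpr h0
  have hgb : Polynomial.aeval b g = 0 := by
    have := minpoly.aeval ℂ b
    rw [hg, map_mul, Polynomial.aeval_X] at this
    obtain ⟨u, hu⟩ := hb
    have : (↑u⁻¹ : B) * (b * Polynomial.aeval b g) = 0 := by rw [this, mul_zero]
    rwa [← mul_assoc, ← hu, Units.inv_mul, one_mul, hu] at this
  have hdvd : minpoly ℂ b ∣ g := minpoly.dvd ℂ b hgb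
  have hgne : g ≠ 0 := by rintro rfl; simp [hg] at hn
  have h1 : g.degree < (minpoly ℂ b).degree := by
    rw [hg, mul_comm]
    exact Polynomial.degree_lt_degree_mul_X hgne
  exact absurd (Polynomial.degree_le_of_dvd hdvd hgne) (not_le.mpr h1)

theorem stmt13 (A B : Type*) [Ring A] [Ring B] [Algebra ℂ A] [Algebra ℂ B]
    [FiniteDimensional ℂ A] [FiniteDimensional ℂ B]
    (a : A) (b : B) (ha : IsUnit a) (hb : IsUnit b) :
    {lam : ℂ | ¬ (((a, 0) : A × B) ∈ Algebra.adjoin ℂ {((a, lam • b) : A × B)} ∧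
        ((0, b) : A × B) ∈ Algebra.adjoin ℂ {((a, lam • b) : A × B)})}.Finite := by
  set m := minpoly ℂ a with hm_def
  set n := minpoly ℂ b with hn_def
  have hia : IsIntegral ℂ a := Algebra.IsIntegral.isIntegral a
  have hib : IsIntegral ℂ b := Algebra.IsIntegral.isIntegral b
  have hm : m ≠ 0 := minpoly.ne_zero hia
  have hn : n ≠ 0 := minpoly.ne_zero hib
  have hc0 : n.coeff 0 ≠ 0 := minpoly_coeff_zero_ne_zero hb
  -- the bad set
  set S : Set ℂ := {0} ∪ (fun p : ℂ × ℂ => p.1 / p.2) '' (m.rootSet ℂ ×ˢ n.rootSet ℂ) with hS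
  have hSfin : S.Finite := by
    apply Set.Finite.union (Set.finite_singleton 0)
    exact Set.Finite.image _ ((m.rootSet_finite ℂ).prod (n.rootSet_finite ℂ))
  apply hSfin.subset
  intro lam hlam
  by_contra hlamS
  apply hlam
  have hlam0 : lam ≠ 0 := fun h => hlamS (Or.inl (by simp [h]))
  set nl := n.scaleRoots lam with hnl_def
  have hnl : nl ≠ 0 := Polynomial.scaleRoots_ne_zero hn lam
  -- coprimality
  have hcop : IsCoprime m nl := by
    apply EuclideanDomain.isCoprime_of_dvd
    · exact fun h => hm h.1
    · intro z hz hz0 hzm hznl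
      have hdz : z.degree ≠ 0 := fun h =>
        hz ((Polynomial.isUnit_iff_degree_eq_zero).mpr h)
      obtain ⟨α, hα⟩ := Complex.isAlgClosed.exists_root z hdz
      have hαm : m.eval α = 0 := by
        obtain ⟨w, hw⟩ := hzm
        rw [hw, Polynomial.eval_mul, hα, zero_mul]
      have hαnl : nl.eval α = 0 := by
        obtain ⟨w, hw⟩ := hznl
        rw [hw, Polynomial.eval_mul, hα, zero_mul]
      set β := α / lam with hβ
      have hββ : lam * β = α := by
        rw [hβ, mul_comm]; exact div_mul_cancel₀ α hlam0
      have hβn : n.eval β = 0 := by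
        have key := Polynomial.scaleRoots_eval₂_mul (RingHom.id ℂ) β lam (p := n)
        try simp only [RingHom.id_apply] at key
        have : Polynomial.eval₂ (RingHom.id ℂ) (lam * β) nl = nl.eval (lam * β) := rfl
        rw [this, hββ, hαnl] at key
        have : Polynomial.eval₂ (RingHom.id ℂ) β n = n.eval β := rfl
        rw [this] at key
        have hlpow : lam ^ n.natDegree ≠ 0 := pow_ne_zero _ hlam0
        exact (mul_eq_zero.mp key.symm).resolve_left hlpow
      have hβ0 : β ≠ 0 := by
        intro h
        rw [h, ← Polynomial.coeff_zero_eq_eval_zero] at hβn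
        exact hc0 hβn
      apply hlamS
      right
      refine ⟨(α, β), ⟨?_, ?_⟩, ?_⟩
      · rw [Polynomial.mem_rootSet]
        exact ⟨hm, by simpa [Polynomial.aeval_def] using hαm⟩
      · rw [Polynomial.mem_rootSet]
        exact ⟨hn, by simpa [Polynomial.aeval_def] using hβn⟩
      · simp only
        rw [← hββ]; exact mul_div_cancel_right₀ lam hβ0
  obtain ⟨u, v, huv⟩ := hcop
  set c : B := lam • b with hc
  set z : A × B := (a, c) with hz
  have hma : Polynomial.aeval a m = 0 := minpoly.aeval ℂ a
  have hnlc : Polynomial.aeval c nl = 0 := by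
    have := Polynomial.scaleRoots_aeval_eq_zero (r := lam) (minpoly.aeval ℂ b)
    rwa [← Algebra.smul_def] at this
  have hvnl : v * nl = 1 - u * m := by linear_combination huv
  have hum : u * m = 1 - v * nl := by linear_combination huv
  constructor
  · -- (a, 0) via f = X * (v * nl)
    have key : Polynomial.aeval z (X * (v * nl)) = ((a, 0) : A × B) := by
      rw [aeval_pair]
      congr 1
      · rw [hvnl]
        simp only [map_mul, map_sub, map_one, Polynomial.aeval_X, hma, mul_zero, sub_zero,
          mul_one]
      · simp only [map_mul, Polynomial.aeval_X, hnlc, mul_zero]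
    rw [← key]
    exact Polynomial.aeval_mem_adjoin_singleton ℂ z
  · -- (0, b) via lam⁻¹ • aeval z (X * (u * m))
    have key : Polynomial.aeval z (X * (u * m)) = ((0, c) : A × B) := by
      rw [aeval_pair]
      congr 1
      · simp only [map_mul, Polynomial.aeval_X, hma, mul_zero]
      · rw [hum]
        simp only [map_mul, map_sub, map_one, Polynomial.aeval_X, hnlc, mul_zero, sub_zero,
          mul_one]
    have hmem : ((0, c) : A × B) ∈ Algebra.adjoin ℂ {z} := by
      rw [← key]; exact Polynomial.aeval_mem_adjoin_singleton ℂ z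
    have : ((0, b) : A × B) = lam⁻¹ • ((0, c) : A × B) := by
      rw [hc, Prod.smul_mk, smul_zero, smul_smul, inv_mul_cancel₀ hlam0, one_smul]
    rw [this]
    exact Subalgebra.smul_mem _ hmem _
end

section
/- Let a be an invertible element of a finite dimensional unital complex algebra A, with minimal polynomial p, and let b be an invertible element of a finite dimensional unital complex algebra B, with minimal polynomial q. If λ ∈ ℂ is nonzero and is not the quotient of a root of p by a root of q, then there exists a polynomial r ∈ ℂ[X] with r(a ⊕ λb) = a ⊕ 0 in A ⊕ B. -/
/-!
`λ • b` is a root of `q.scaleRoots λ`, whose roots are the `λ ν` with `q ν = 0`. As `a` is a unit,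
`0` is not a root of `p`, so the hypothesis makes `p` and `q.scaleRoots λ` coprime. From a Bézout
identity `u p + v q.scaleRoots λ = 1`, the polynomial `v q.scaleRoots λ` evaluates to the
idempotent `(1, 0)` at `(a, λ • b)`, and multiplying by `X` gives `(a, 0)`.
-/

open Polynomial

theorem minpoly.not_isRoot_zero_of_isUnit {R A : Type*} [CommRing R] [Nontrivial R] [Ring A]
    [Algebra R A] {a : A} (hint : IsIntegral R a) (ha : IsUnit a) : ¬(minpoly R a).IsRoot 0 := by
  intro h0
  obtain ⟨q, hq⟩ : X ∣ minpoly R a := X_dvd_iff.mpr (by rwa [coeff_zero_eq_eval_zero])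
  have hq_monic : q.Monic := monic_X.of_mul_monic_left (hq ▸ minpoly.monic hint)
  refine minpoly.aeval_ne_zero_of_dvdNotUnit_minpoly hint hq_monic
    ⟨hq_monic.ne_zero, X, not_isUnit_X, by rw [hq, mul_comm]⟩ ?_
  have := minpoly.aeval R a
  rw [hq, map_mul, aeval_X] at this
  exact ha.mul_right_eq_zero.mp this

theorem Polynomial.isCoprime_scaleRoots_of_forall_ne_div {K : Type*} [Field K] [IsAlgClosed K]
    {p q : K[X]} {c : K} (hc : c ≠ 0) (hp : ¬p.IsRoot 0)
    (h : ∀ μ ν : K, p.IsRoot μ → q.IsRoot ν → c ≠ μ / ν) : IsCoprime p (q.scaleRoots c) := by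
  rw [isCoprime_iff_aeval_ne_zero_of_isAlgClosed K K]
  intro z
  by_contra! ⟨hpz, hqz⟩
  rw [coe_aeval_eq_eval] at hpz hqz
  have hz : z ≠ 0 := by rintro rfl; exact hp hpz
  have hqz' : q.IsRoot (z / c) := by
    rw [← mul_div_cancel₀ z hc, scaleRoots_eval_mul] at hqz
    exact (mul_eq_zero.mp hqz).resolve_left (pow_ne_zero _ hc)
  exact h z (z / c) hpz hqz' (by field_simp)

theorem Polynomial.exists_aeval_prod_eq_one_zero {R A B : Type*} [CommRing R] [Ring A] [Ring B]
    [Algebra R A] [Algebra R B] {a : A} {b : B} {p q : R[X]} (hpq : IsCoprime p q)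
    (hp : aeval a p = 0) (hq : aeval b q = 0) : ∃ r : R[X], aeval (a, b) r = (1, 0) := by
  obtain ⟨u, v, huv⟩ := hpq
  have hvq : aeval a (v * q) = 1 := by
    rw [eq_sub_of_add_eq' huv, map_sub, map_mul, hp, mul_zero, sub_zero, map_one]
  refine ⟨v * q, ?_⟩
  rw [aeval_prod_apply]
  exact Prod.ext hvq (show aeval b (v * q) = 0 by rw [map_mul, hq, mul_zero])

theorem stmt14_general (A B : Type*) [Ring A] [Ring B] [Algebra ℂ A] [Algebra ℂ B]
    [FiniteDimensional ℂ A]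
    (a : A) (b : B) (ha : IsUnit a)
    (lam : ℂ) (hlam : lam ≠ 0)
    (hroot : ∀ μ ν : ℂ, (minpoly ℂ a).IsRoot μ → (minpoly ℂ b).IsRoot ν → lam ≠ μ / ν) :
    ∃ r : Polynomial ℂ, Polynomial.aeval ((a, lam • b) : A × B) r = (a, 0) := by
  have hcop : IsCoprime (minpoly ℂ a) ((minpoly ℂ b).scaleRoots lam) :=
    isCoprime_scaleRoots_of_forall_ne_div hlam
      (minpoly.not_isRoot_zero_of_isUnit (.of_finite ℂ a) ha) hroot
  have hb : aeval (lam • b) ((minpoly ℂ b).scaleRoots lam) = 0 := by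
    rw [Algebra.smul_def]
    exact scaleRoots_aeval_eq_zero (minpoly.aeval ℂ b)
  obtain ⟨r, hr⟩ := exists_aeval_prod_eq_one_zero hcop (minpoly.aeval ℂ a) hb
  refine ⟨X * r, ?_⟩
  rw [map_mul, hr, aeval_X, Prod.mk_mul_mk, mul_one, mul_zero]

theorem stmt14 (A B : Type*) [Ring A] [Ring B] [Algebra ℂ A] [Algebra ℂ B]
    [FiniteDimensional ℂ A] [FiniteDimensional ℂ B]
    (a : A) (b : B) (ha : IsUnit a) (hb : IsUnit b)
    (lam : ℂ) (hlam : lam ≠ 0)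
    (hroot : ∀ μ ν : ℂ, (minpoly ℂ a).IsRoot μ → (minpoly ℂ b).IsRoot ν → lam ≠ μ / ν) :
    ∃ r : Polynomial ℂ, Polynomial.aeval ((a, lam • b) : A × B) r = (a, 0) :=
  stmt14_general A B a b ha lam hlam hroot
end

section
/- Let S be an involutive algebra anti-automorphism of M_n(ℂ) ⊕ M_n(ℂ) that interchanges the two minimal central projections. Then there exists an invertible element x ⊕ y such that x ⊕ y and S(x ⊕ y) generate M_n(ℂ) ⊕ M_n(ℂ) as a unital ℂ-algebra. -/
/-!
Restricting `S` to the first summand and projecting to the second gives an anti-automorphism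
`σ` of `M_n(ℂ)` with `S (x, σ y) = (y, σ x)`. Choose invertible `a, c` that generate `M_n(ℂ)`
and have coprime annihilating polynomials `p, q` (a diagonal matrix with distinct entries and
`1 + J`, `J` the all-ones matrix). For `z = (a, σ c)` we get `S z = (c, σ a)`, and since `σ c`
is also annihilated by `q`, a polynomial `≡ 1 mod p` and `≡ 0 mod q` evaluated at `z` is the
central projection `(1, 0)`. The algebra generated by `z` and `S z` therefore splits as the
product of the algebras generated by `{a, c}` and `{σ c, σ a}`, both of which are everything.
-/

open Matrix Polynomial MulOpposite

theorem Subalgebra.eq_top_of_one_zero_mem {R A B : Type*} [CommRing R] [Ring A] [Ring B]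
    [Algebra R A] [Algebra R B] {C : Subalgebra R (A × B)} (h : ((1 : A), (0 : B)) ∈ C)
    (hfst : C.map (AlgHom.fst R A B) = ⊤) (hsnd : C.map (AlgHom.snd R A B) = ⊤) : C = ⊤ := by
  have h' : ((0 : A), (1 : B)) ∈ C := by
    simpa [Prod.one_eq_mk] using sub_mem (one_mem C) h
  rw [eq_top_iff]
  rintro ⟨x, y⟩ -
  obtain ⟨⟨x, y'⟩, hx, rfl⟩ : x ∈ C.map (AlgHom.fst R A B) := hfst ▸ Algebra.mem_top
  obtain ⟨⟨x', y⟩, hy, rfl⟩ : y ∈ C.map (AlgHom.snd R A B) := hsnd ▸ Algebra.mem_top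
  simpa using add_mem (mul_mem h hx) (mul_mem h' hy)

theorem Polynomial.one_zero_mem_adjoin_singleton {R A B : Type*} [CommSemiring R] [Semiring A]
    [Semiring B] [Algebra R A] [Algebra R B] {x : A} {y : B} {p q : R[X]} (hpq : IsCoprime p q)
    (hp : aeval x p = 0) (hq : aeval y q = 0) :
    ((1 : A), (0 : B)) ∈ Algebra.adjoin R {(x, y)} := by
  obtain ⟨u, v, huv⟩ := hpq
  have hx : aeval x (v * q) = 1 := by
    simpa [hp] using congrArg (aeval x) huv
  convert aeval_mem_adjoin_singleton R (x, y) (p := v * q) using 1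
  simp [aeval_prod_apply, hx, hq]

theorem Algebra.adjoin_image_unop_eq_top {R A B : Type*} [CommSemiring R] [Semiring A]
    [Semiring B] [Algebra R A] [Algebra R B] {f : A →ₐ[R] Bᵐᵒᵖ} (hf : Function.Surjective f)
    {s : Set A} (hs : Algebra.adjoin R s = ⊤) : Algebra.adjoin R ((unop ∘ f) '' s) = ⊤ := by
  have : Algebra.adjoin R (f '' s) = ⊤ := by
    rw [Algebra.adjoin_image, hs, Algebra.map_top, AlgHom.range_eq_top]
    exact hf
  rw [Set.image_comp, ← Subalgebra.unop_top, ← this, Subalgebra.unop_adjoin]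
  congr 1
  ext y
  simp [← unop_inj]

section Matrix

variable {ι : Type*} [Fintype ι] [DecidableEq ι]

theorem Matrix.aeval_diagonal {R : Type*} [CommSemiring R] (d : ι → R) (p : R[X]) :
    aeval (diagonal d) p = diagonal fun i => p.eval (d i) := by
  rw [← diagonalAlgHom_apply (R := R), aeval_algHom_apply, aeval_pi_apply]
  simp

variable {K : Type*} [Field K]

theorem Matrix.single_mem_adjoin_diagonal {d : ι → K} (hd : Function.Injective d) (i : ι) :
    single i i 1 ∈ Algebra.adjoin K {diagonal d} := by
  convert aeval_mem_adjoin_singleton K (diagonal d) (p := Lagrange.basis Finset.univ d i)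
  rw [aeval_diagonal, ← diagonal_single]
  congr 1
  ext j
  rcases eq_or_ne j i with rfl | hji
  · simp [Lagrange.eval_basis_self hd.injOn (Finset.mem_univ j)]
  · simp [hji, Lagrange.eval_basis_of_ne hji.symm (Finset.mem_univ j)]

theorem Matrix.adjoin_diagonal_pair_eq_top {d : ι → K} (hd : Function.Injective d)
    {c : Matrix ι ι K} (hc : ∀ i j, c i j ≠ 0) : Algebra.adjoin K {diagonal d, c} = ⊤ := by
  set B := Algebra.adjoin K {diagonal d, c}
  have hdiag : ∀ i, single i i 1 ∈ B := fun i =>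
    Algebra.adjoin_mono (by simp) (single_mem_adjoin_diagonal hd i)
  have hsingle : ∀ i j, single i j (1 : K) ∈ B := by
    intro i j
    have : single i j (1 : K) = (c i j)⁻¹ • (single i i 1 * c * single j j 1) := by
      simp [inv_mul_cancel₀ (hc i j)]
    rw [this]
    exact B.smul_mem (mul_mem (mul_mem (hdiag i) (Algebra.subset_adjoin (by simp))) (hdiag j)) _
  rw [eq_top_iff]
  intro x _
  rw [matrix_eq_sum_single x]
  refine Subalgebra.sum_mem B fun i _ => Subalgebra.sum_mem B fun j _ => ?_
  simpa using B.smul_mem (hsingle i j) (x i j)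

end Matrix

theorem Matrix.exists_units_coprime_annihilators_adjoin_eq_top (K ι : Type*) [Field K]
    [CharZero K] [Fintype ι] [DecidableEq ι] :
    ∃ (a c : Matrix ι ι K) (p q : K[X]), IsUnit a ∧ IsUnit c ∧ IsCoprime p q ∧
      aeval a p = 0 ∧ aeval c q = 0 ∧ Algebra.adjoin K {a, c} = ⊤ := by
  -- `J² = mJ`, so `1 + J` is annihilated by `(X - 1)(X - (m + 1))`; the diagonal entries
  -- `m + 2, …, 2m + 1` avoid both roots.
  set m := Fintype.card ι
  set J : Matrix ι ι K := of fun _ _ => 1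
  have hJ : J * J = (m : K) • J := by
    ext i j
    simp [J, mul_apply, m]
  have hm : (m + 1 : K) ≠ 0 := by exact_mod_cast m.succ_ne_zero
  refine ⟨diagonal fun i => ((m + 2 + Fintype.equivFin ι i : ℕ) : K), 1 + J,
    ∏ i, (X - C ((m + 2 + Fintype.equivFin ι i : ℕ) : K)), (X - C 1) * (X - C ((m : K) + 1)),
    ?_, ?_, ?_, ?_, ?_, ?_⟩
  · exact isUnit_diagonal.2 (Pi.isUnit_iff.2 fun i => (Nat.cast_ne_zero.2 (by omega)).isUnit)
  · refine IsUnit.of_mul_eq_one (1 - ((m : K) + 1)⁻¹ • J) ?_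
    have ht : ((m : K) + 1)⁻¹ * (m + 1) = 1 := inv_mul_cancel₀ hm
    simp only [mul_sub, add_mul, one_mul, mul_one, mul_smul_comm, hJ]
    linear_combination (norm := module) -(ht • J)
  · refine IsCoprime.prod_left fun i _ => IsCoprime.mul_right ?_ ?_ <;>
      refine isCoprime_X_sub_C_of_isUnit_sub (sub_ne_zero.2 ?_).isUnit
    · exact_mod_cast (by omega : m + 2 + (Fintype.equivFin ι i : ℕ) ≠ 1)
    · exact_mod_cast (by omega : m + 2 + (Fintype.equivFin ι i : ℕ) ≠ m + 1)
  · rw [aeval_diagonal, ← diagonal_zero]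
    congr 1
    ext i
    simpa [eval_prod] using Finset.prod_eq_zero (Finset.mem_univ i) (sub_self _)
  · simp only [map_mul, map_sub, aeval_X, aeval_C, map_one, Algebra.algebraMap_eq_smul_one,
      add_sub_cancel_left, mul_sub, mul_add, mul_one, mul_smul_comm, hJ]
    module
  · refine adjoin_diagonal_pair_eq_top (fun i j h => ?_) fun i j => ?_
    · have : m + 2 + (Fintype.equivFin ι i : ℕ) = m + 2 + Fintype.equivFin ι j := by
        exact_mod_cast h
      exact (Fintype.equivFin ι).injective (Fin.ext (by omega))
    · by_cases h : i = j <;> simp [J, h]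

namespace LinearMap

variable {R A : Type*} [CommSemiring R] [Semiring A] [Algebra R A] {S : A × A →ₗ[R] A × A}

theorem fst_apply_inl (hmul : ∀ x y, S (x * y) = S y * S x) (hswap : S (1, 0) = (0, 1))
    (x : A) : (S (x, 0)).1 = 0 := by
  simpa [hswap] using congrArg Prod.fst (hmul (1, 0) (x, 0))

theorem snd_apply_inr (hmul : ∀ x y, S (x * y) = S y * S x) (hinvol : ∀ x, S (S x) = x)
    (hswap : S (1, 0) = (0, 1)) (y : A) : (S (0, y)).2 = 0 := by
  have hswap' : S (0, 1) = (1, 0) := by rw [← hswap, hinvol]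
  simpa [hswap'] using congrArg Prod.snd (hmul (0, y) (0, 1))

def antiHomOfSwap (hmul : ∀ x y, S (x * y) = S y * S x) (hswap : S (1, 0) = (0, 1)) :
    A →ₐ[R] Aᵐᵒᵖ :=
  AlgHom.ofLinearMap
    ((opLinearEquiv R).toLinearMap ∘ₗ LinearMap.snd R A A ∘ₗ S ∘ₗ LinearMap.inl R A A)
    (by simp [hswap])
    (fun x y => by simpa using congrArg (op ∘ Prod.snd) (hmul (x, 0) (y, 0)))

@[simp]
theorem unop_antiHomOfSwap_apply (hmul : ∀ x y, S (x * y) = S y * S x)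
    (hswap : S (1, 0) = (0, 1)) (x : A) : unop (antiHomOfSwap hmul hswap x) = (S (x, 0)).2 :=
  rfl

theorem antiHomOfSwap_surjective (hmul : ∀ x y, S (x * y) = S y * S x)
    (hinvol : ∀ x, S (S x) = x) (hswap : S (1, 0) = (0, 1)) :
    Function.Surjective (antiHomOfSwap hmul hswap) := by
  intro y
  refine ⟨(S (0, unop y)).1, unop_injective ?_⟩
  have h : ((S (0, unop y)).1, (0 : A)) = S (0, unop y) :=
    Prod.ext rfl (snd_apply_inr hmul hinvol hswap _).symm
  rw [unop_antiHomOfSwap_apply, h, hinvol]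

theorem apply_mk_snd_apply_inl (hmul : ∀ x y, S (x * y) = S y * S x)
    (hinvol : ∀ x, S (S x) = x) (hswap : S (1, 0) = (0, 1)) (x y : A) :
    S (x, (S (y, 0)).2) = (y, (S (x, 0)).2) := by
  have hsplit : ((x, (S (y, 0)).2) : A × A) = (x, 0) + S (y, 0) := by
    ext <;> simp [fst_apply_inl hmul hswap]
  ext <;> simp [hsplit, hinvol, fst_apply_inl hmul hswap]

end LinearMap

theorem stmt15 (n : ℕ)
    (S : (Matrix (Fin n) (Fin n) ℂ × Matrix (Fin n) (Fin n) ℂ) →ₗ[ℂ]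
         (Matrix (Fin n) (Fin n) ℂ × Matrix (Fin n) (Fin n) ℂ))
    (hmul : ∀ x y, S (x * y) = S y * S x) (hinvol : ∀ x, S (S x) = x)
    (hswap : S (1, 0) = (0, 1)) :
    ∃ z : Matrix (Fin n) (Fin n) ℂ × Matrix (Fin n) (Fin n) ℂ, IsUnit z ∧
      Algebra.adjoin ℂ {z, S z} = ⊤ := by
  obtain ⟨a, c, p, q, ha, hc, hpq, hpa, hqc, hac⟩ :=
    Matrix.exists_units_coprime_annihilators_adjoin_eq_top ℂ (Fin n)
  set σ := LinearMap.antiHomOfSwap hmul hswap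
  have hqσc : aeval (unop (σ c)) q = 0 := by
    rw [← op_inj, ← aeval_op_apply, op_unop, aeval_algHom_apply, hqc, map_zero, op_zero]
  refine ⟨(a, unop (σ c)), Prod.isUnit_iff.2 ⟨ha, (hc.map σ).unop⟩, ?_⟩
  simp only [σ, LinearMap.unop_antiHomOfSwap_apply,
    LinearMap.apply_mk_snd_apply_inl hmul hinvol hswap] at hqσc ⊢
  refine Subalgebra.eq_top_of_one_zero_mem ?_ ?_ ?_
  · exact Algebra.adjoin_mono (by simp) (one_zero_mem_adjoin_singleton hpq hpa hqσc)
  · rw [AlgHom.map_adjoin, Set.image_pair]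
    exact hac
  · rw [AlgHom.map_adjoin, Set.image_pair, Set.pair_comm]
    simpa [Set.image_pair] using Algebra.adjoin_image_unop_eq_top
      (LinearMap.antiHomOfSwap_surjective hmul hinvol hswap) hac
end
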